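/- For the Gaussian conditional path p_t(x|x₁) = N(x; t x₁, (1−t)² σ² I) on ℝ^d generated from prior N(0, σ² I) via linear interpolation, the conditional vector field u_t(x|x₁) = (x₁ − x)/(1−t) satisfies the continuity equation ∂_t p_t(x|x₁) + ∇·(p_t(x|x₁) u_t(x|x₁)) = 0 for t ∈ [0,1). -/

import Mathlib

/-!
Write `a = 1 - t` and `v = x - t x₁`. Differentiating the normalizer `(2π a² σ²)^(-d/2)` and the
exponent in `t` gives `∂ₜ p = p (d / a + ⟪v, x₁⟫ / (σ² a²) - ‖v‖² / (σ² a³))`. In space,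
`∇ p = -p v / (σ² a²)` and the field `u = (x₁ - x) / a` has divergence `-d / a`; as
`x₁ - x = a x₁ - v`, the product rule `∇·(p u) = p ∇·u + ⟪∇p, u⟫` is exactly `-∂ₜ p`.
-/

open Real
open scoped RealInnerProductSpace

section InnerProductSpace

variable {E : Type*} [NormedAddCommGroup E] [InnerProductSpace ℝ E]

theorem hasFDerivAt_exp_neg_norm_sub_sq_div (m : E) (k : ℝ) (x : E) :
    HasFDerivAt (fun y => exp (-‖y - m‖ ^ 2 / k))
      ((-(2 / k) * exp (-‖x - m‖ ^ 2 / k)) • innerSL ℝ (x - m)) x := by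
  simp only [div_eq_mul_inv]
  refine (HasFDerivAt.mul_const ((hasFDerivAt_id x).sub_const m).norm_sq.neg k⁻¹).exp
    |>.congr_fderiv ?_
  ext w
  simp only [id_eq, Pi.neg_apply, map_sub, ContinuousLinearMap.comp_id, smul_neg, neg_apply,
    smul_apply, sub_apply, coe_innerSL_apply, nsmul_eq_mul, Nat.cast_ofNat, smul_eq_mul]
  ring

theorem hasDerivAt_exp_neg_norm_sub_smul_sq_div {σ t : ℝ} (hσ : σ ≠ 0) (ht : 1 - t ≠ 0)
    (x c : E) :
    HasDerivAt (fun s => exp (-‖x - s • c‖ ^ 2 / (2 * (1 - s) ^ 2 * σ ^ 2)))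
      (exp (-‖x - t • c‖ ^ 2 / (2 * (1 - t) ^ 2 * σ ^ 2)) *
        (⟪x - t • c, c⟫ / (σ ^ 2 * (1 - t) ^ 2) - ‖x - t • c‖ ^ 2 / (σ ^ 2 * (1 - t) ^ 3))) t := by
  have hnum : HasDerivAt (fun s => ‖x - s • c‖ ^ 2) (2 * ⟪x - t • c, -c⟫) t := by
    simpa using ((hasDerivAt_id t).smul_const c).const_sub x |>.norm_sq
  have hden : HasDerivAt (fun s : ℝ => 2 * (1 - s) ^ 2 * σ ^ 2)
      (2 * (2 * (1 - t) * -1) * σ ^ 2) t := by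
    simpa using ((((hasDerivAt_id t).const_sub 1).pow 2).const_mul 2).mul_const (σ ^ 2)
  refine (hnum.neg.div hden (by positivity)).exp.congr_deriv ?_
  simp only [Pi.neg_apply, Pi.div_apply, inner_neg_right]
  field_simp

theorem hasDerivAt_gaussian_normalizer {σ t : ℝ} (hσ : σ ≠ 0) (ht : 1 - t ≠ 0) (n : ℝ) :
    HasDerivAt (fun s => (2 * π * (1 - s) ^ 2 * σ ^ 2) ^ (-n / 2))
      ((2 * π * (1 - t) ^ 2 * σ ^ 2) ^ (-n / 2) * (n / (1 - t))) t := by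
  have hpos : 0 < 2 * π * (1 - t) ^ 2 * σ ^ 2 := by positivity
  have hbase : HasDerivAt (fun s : ℝ => 2 * π * (1 - s) ^ 2 * σ ^ 2)
      (2 * π * (2 * (1 - t) * -1) * σ ^ 2) t := by
    simpa using ((((hasDerivAt_id t).const_sub 1).pow 2).const_mul (2 * π)).mul_const (σ ^ 2)
  refine (hbase.rpow_const (p := -n / 2) (Or.inl hpos.ne')).congr_deriv ?_
  rw [rpow_sub_one hpos.ne']
  field_simp

end InnerProductSpace

theorem sum_fderiv_single_mul_affine {ι : Type*} [Fintype ι] [DecidableEq ι]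
    {f : EuclideanSpace ℝ ι → ℝ} {x : EuclideanSpace ℝ ι} (hf : DifferentiableAt ℝ f x)
    (α : ℝ) (b : EuclideanSpace ℝ ι) :
    ∑ i, fderiv ℝ (fun y => f y * (α * (b i - y i))) x (EuclideanSpace.single i 1) =
      α * (fderiv ℝ f x (b - x) - Fintype.card ι * f x) := by
  have hterm : ∀ i, fderiv ℝ (fun y => f y * (α * (b i - y i))) x (EuclideanSpace.single i 1) =
      α * ((b i - x i) * fderiv ℝ f x (EuclideanSpace.single i 1) - f x) := by
    intro i
    have hcoord : HasFDerivAt (fun y : EuclideanSpace ℝ ι => α * (b i - y i))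
        (α • -EuclideanSpace.proj i) x :=
      (((EuclideanSpace.proj i : EuclideanSpace ℝ ι →L[ℝ] ℝ).hasFDerivAt (x := x)).const_sub
        (b i)).const_mul α
    have hprod : HasFDerivAt (fun y => f y * (α * (b i - y i))) _ x := hf.hasFDerivAt.mul hcoord
    rw [hprod.fderiv]
    simp only [smul_neg, add_apply, neg_apply, smul_apply, PiLp.proj_apply, PiLp.single_eq_same,
      smul_eq_mul, mul_one]
    ring
  have hexpand : ∑ i, (b i - x i) * fderiv ℝ f x (EuclideanSpace.single i 1) =
      fderiv ℝ f x (b - x) := by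
    conv_rhs => rw [← (EuclideanSpace.basisFun ι ℝ).sum_repr (b - x)]
    simp [map_sum]
  simp_rw [hterm, ← Finset.mul_sum, Finset.sum_sub_distrib, hexpand]
  simp

/-- For the Gaussian conditional path `p_t(x|x₁) = N(x; t x₁, (1-t)² σ² I)` on `ℝ^d`,
the conditional vector field `u_t(x|x₁) = (x₁ - x)/(1-t)` satisfies the continuity
equation `∂_t p_t + ∇·(p_t u_t) = 0` for `t ∈ [0,1)`, where the divergence is the sum of
the coordinate-wise partial derivatives of `p_t(·|x₁) u_t(·|x₁)`. -/
theorem gaussian_path_continuity_equation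
    (d : ℕ) (σ : ℝ) (hσ : 0 < σ) (x₁ : EuclideanSpace ℝ (Fin d))
    (p : ℝ → EuclideanSpace ℝ (Fin d) → ℝ)
    (hp : ∀ t x, p t x = (2 * π * (1 - t) ^ 2 * σ ^ 2) ^ (-(d : ℝ) / 2) *
      Real.exp (-‖x - t • x₁‖ ^ 2 / (2 * (1 - t) ^ 2 * σ ^ 2))) :
    ∀ t ∈ Set.Ico (0 : ℝ) 1, ∀ x : EuclideanSpace ℝ (Fin d),
      deriv (fun s => p s x) t +
        ∑ i, (fderiv ℝ (fun y : EuclideanSpace ℝ (Fin d) =>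
          p t y * ((1 - t)⁻¹ * (x₁ i - y i))) x) (EuclideanSpace.single i 1) = 0 := by
  intro t ht x
  have ha : 1 - t ≠ 0 := sub_ne_zero.2 ht.2.ne'
  have hp_time : HasDerivAt (fun s => p s x) (p t x * (d / (1 - t) +
      (⟪x - t • x₁, x₁⟫ / (σ ^ 2 * (1 - t) ^ 2) -
        ‖x - t • x₁‖ ^ 2 / (σ ^ 2 * (1 - t) ^ 3)))) t := by
    simp only [hp]
    exact ((hasDerivAt_gaussian_normalizer hσ.ne' ha d).mul
      (hasDerivAt_exp_neg_norm_sub_smul_sq_div hσ.ne' ha x x₁)).congr_deriv (by ring)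
  have hp_space : HasFDerivAt (p t) ((2 * π * (1 - t) ^ 2 * σ ^ 2) ^ (-(d : ℝ) / 2) •
      ((-(2 / (2 * (1 - t) ^ 2 * σ ^ 2)) * exp (-‖x - t • x₁‖ ^ 2 / (2 * (1 - t) ^ 2 * σ ^ 2))) •
        innerSL ℝ (x - t • x₁))) x := by
    rw [funext (hp t)]
    exact (hasFDerivAt_exp_neg_norm_sub_sq_div _ _ x).const_mul _
  have hinner : ⟪x - t • x₁, x₁ - x⟫ = (1 - t) * ⟪x - t • x₁, x₁⟫ - ‖x - t • x₁‖ ^ 2 := by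
    rw [show x₁ - x = (1 - t) • x₁ - (x - t • x₁) by module, inner_sub_right, inner_smul_right,
      real_inner_self_eq_norm_sq]
  rw [hp_time.deriv, sum_fderiv_single_mul_affine hp_space.differentiableAt, hp_space.fderiv,
    hp t x]
  simp only [smul_apply, innerSL_apply_apply, smul_eq_mul, hinner, Fintype.card_fin]
  field_simp
  ring
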